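/- arXiv:2002.01581 — 3 statements merged into one kernel-verified Lean document; each statement's English description precedes it below -/
import Mathlib

section
/- Real induction principle: Let a < b be real numbers and S ⊆ [a,b] a subset satisfying (1) a ∈ S; (2) for every x ∈ S with a ≤ x < b there exists y > x such that [x,y] ⊆ S; (3) for every x with a ≤ x ≤ b, if [a,x) ⊆ S then x ∈ S. Then S = [a,b]. -/
/-- Real induction principle. -/
theorem real_induction (a b : ℝ) (hab : a < b) (S : Set ℝ)
    (hsub : S ⊆ Set.Icc a b)
    (h1 : a ∈ S)
    (h2 : ∀ x ∈ S, a ≤ x → x < b → ∃ y, x < y ∧ Set.Icc x y ⊆ S)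
    (h3 : ∀ x, a ≤ x → x ≤ b → Set.Ico a x ⊆ S → x ∈ S) :
    S = Set.Icc a b := by
  set T : Set ℝ := {x | x ∈ Set.Icc a b ∧ Set.Icc a x ⊆ S} with hT
  have haT : a ∈ T := by
    refine ⟨⟨le_refl a, le_of_lt hab⟩, ?_⟩
    intro t ht
    have : t = a := le_antisymm ht.2 ht.1
    simpa [this] using h1
  have hne : T.Nonempty := ⟨a, haT⟩
  have hbdd : BddAbove T := ⟨b, fun x hx => hx.1.2⟩
  set c := sSup T with hc
  have hac : a ≤ c := le_csSup hbdd haT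
  have hcb : c ≤ b := csSup_le hne (fun x hx => hx.1.2)
  have hIco : Set.Ico a c ⊆ S := by
    intro t ht
    obtain ⟨x, hxT, htx⟩ := (lt_csSup_iff hbdd hne).mp ht.2
    exact hxT.2 ⟨ht.1, le_of_lt htx⟩
  have hcS : c ∈ S := h3 c hac hcb hIco
  have hIcc : Set.Icc a c ⊆ S := by
    intro t ht
    rcases lt_or_eq_of_le ht.2 with h | h
    · exact hIco ⟨ht.1, h⟩
    · simpa [h] using hcS
  have hcT : c ∈ T := ⟨⟨hac, hcb⟩, hIcc⟩
  have hcb' : c = b := by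
    by_contra hne'
    have hclt : c < b := lt_of_le_of_ne hcb hne'
    obtain ⟨y, hcy, hyS⟩ := h2 c hcS hac hclt
    set y' := min y b with hy'
    have hcy' : c < y' := lt_min hcy hclt
    have hy'T : y' ∈ T := by
      refine ⟨⟨le_trans hac (le_of_lt hcy'), min_le_right _ _⟩, ?_⟩
      intro t ht
      rcases le_or_gt t c with h | h
      · exact hIcc ⟨ht.1, h⟩
      · exact hyS ⟨le_of_lt h, le_trans ht.2 (min_le_left _ _)⟩
    exact absurd (le_csSup hbdd hy'T) (not_le.mpr hcy')
  apply le_antisymm hsub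
  intro t ht
  exact hIcc ⟨ht.1, hcb' ▸ ht.2⟩
end

section
/- Conditioning preserves majorization: Let f and g be pdfs on ℝ with f even and quasi-concave and f majorizing g. Let c > 0 and h: ℝ → [0,1] be measurable with ∫ f(x) 1_{(-c,c)}(x) dx = ∫ g(x) h(x) dx > 0. Then the normalized pdf f(x)1_{(-c,c)}(x) / ∫ f 1_{(-c,c)} majorizes the normalized pdf g(x)h(x) / ∫ g h. -/
/-!
Write `F = f · 1_{(-c,c)}` and `G = g · h`. They have the same total mass, so it suffices that `F`
majorizes `G`. Let `B` have measure `m`. If `m ≥ 2c`, an interval of length `m` containing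
`(-c, c)` carries all the mass of `F`, which bounds `∫_B G`. If `m < 2c`, then
`∫_B G ≤ ∫_B g ≤ ∫_A f` for some `A` of measure `m`; an even quasi-concave `f` decreases in
`|x|`, so by the bathtub principle the centred interval of length `m`, which lies inside `(-c, c)`,
carries at least the `f`-mass of `A`.
-/

open MeasureTheory

/-- `f` majorizes `g`. -/
def Majorizes (f g : ℝ → ℝ) : Prop :=
  ∀ B : Set ℝ, MeasurableSet B → volume B < ⊤ →
    ∃ A : Set ℝ, MeasurableSet A ∧ volume A = volume B ∧
      (∫ x in B, g x) ≤ ∫ x in A, f x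

/-- `f` is a probability density function on `ℝ`. -/
def IsPdf (f : ℝ → ℝ) : Prop :=
  (∀ x, 0 ≤ f x) ∧ Integrable f ∧ (∫ x, f x) = 1

/-- `f` is even. -/
def EvenFun (f : ℝ → ℝ) : Prop := ∀ x, f (-x) = f x

/-- `f` is quasi-concave. -/
def QuasiConcave (f : ℝ → ℝ) : Prop :=
  ∀ x y : ℝ, ∀ lam : ℝ, 0 ≤ lam → lam ≤ 1 →
    min (f x) (f y) ≤ f (lam * x + (1 - lam) * y)

open Set

theorem QuasiConcave.convex_superlevel {f : ℝ → ℝ} (hfq : QuasiConcave f) (r : ℝ) :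
    Convex ℝ {x | r ≤ f x} := by
  intro x hx y hy a b ha hb hab
  obtain rfl : b = 1 - a := by linarith
  exact (le_min hx hy).trans (hfq x y a ha (by linarith))

theorem EvenFun.apply_abs {f : ℝ → ℝ} (hfe : EvenFun f) (x : ℝ) : f |x| = f x := by
  rcases abs_choice x with h | h <;> rw [h]
  exact hfe x

theorem EvenFun.apply_le_of_abs_le {f : ℝ → ℝ} (hfe : EvenFun f) (hfq : QuasiConcave f)
    {x y : ℝ} (hxy : |x| ≤ |y|) : f y ≤ f x := by
  have hconv := convex_iff_ordConnected.mp (hfq.convex_superlevel (f y))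
  have hpos : f y ≤ f |y| := (hfe.apply_abs y).ge
  have hneg : f y ≤ f (-|y|) := by rw [hfe]; exact hpos
  exact hconv.out hneg hpos (abs_le.mp hxy)

/-- Bathtub principle: mass is gained by trading the part of `s` where `f ≤ a` for an equally
large set where `f ≥ a`. -/
theorem setIntegral_le_setIntegral_of_le_on_sdiff {α : Type*} [MeasurableSpace α]
    {μ : Measure α} {f : α → ℝ} {s t : Set α} (hf : Integrable f μ) (hs : MeasurableSet s)
    (ht : MeasurableSet t) (hst : μ s = μ t) (hfin : μ s ≠ ⊤) (a : ℝ)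
    (hs_le : ∀ x ∈ s \ t, f x ≤ a) (ht_ge : ∀ x ∈ t \ s, a ≤ f x) :
    ∫ x in s, f x ∂μ ≤ ∫ x in t, f x ∂μ := by
  have hsdiff : μ (s \ t) = μ (t \ s) := measure_sdiff_symm hs.nullMeasurableSet
    ht.nullMeasurableSet hst (ne_top_of_le_ne_top hfin (measure_mono inter_subset_left))
  have hfin_st : μ (s \ t) ≠ ⊤ := ne_top_of_le_ne_top hfin (measure_mono sdiff_subset)
  have hfin_ts : μ (t \ s) ≠ ⊤ := hsdiff ▸ hfin_st
  have hdiff : ∫ x in s \ t, f x ∂μ ≤ ∫ x in t \ s, f x ∂μ :=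
    calc ∫ x in s \ t, f x ∂μ
        ≤ ∫ _ in s \ t, a ∂μ :=
          setIntegral_mono_on hf.integrableOn (integrableOn_const hfin_st) (hs.diff ht) hs_le
      _ = ∫ _ in t \ s, a ∂μ := by simp only [setIntegral_const, Measure.real, hsdiff]
      _ ≤ ∫ x in t \ s, f x ∂μ :=
          setIntegral_mono_on (integrableOn_const hfin_ts) hf.integrableOn (ht.diff hs) ht_ge
  rw [← integral_inter_add_sdiff (s := s) ht hf.integrableOn,
    ← integral_inter_add_sdiff (s := t) hs hf.integrableOn, inter_comm t s]
  linarith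

theorem setIntegral_le_setIntegral_centred_Ioo {f : ℝ → ℝ} (hf : Integrable f)
    (hmono : ∀ x y : ℝ, |x| ≤ |y| → f y ≤ f x) {A : Set ℝ} (hA : MeasurableSet A)
    (hAfin : volume A ≠ ⊤) :
    ∫ x in A, f x ≤ ∫ x in Ioo (-(volume.real A / 2)) (volume.real A / 2), f x := by
  set r := volume.real A / 2
  have hr : |r| = r := abs_of_nonneg (by positivity)
  refine setIntegral_le_setIntegral_of_le_on_sdiff hf hA measurableSet_Ioo ?_ hAfin (f r) ?_ ?_
  · rw [Real.volume_Ioo, sub_neg_eq_add, add_halves, ofReal_measureReal hAfin]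
  · rintro x ⟨-, hx⟩
    rw [mem_Ioo, ← abs_lt, not_lt] at hx
    exact hmono r x (hr.trans_le hx)
  · rintro x ⟨hx, -⟩
    rw [mem_Ioo, ← abs_lt] at hx
    exact hmono x r (hr.symm ▸ hx.le)

theorem Majorizes.div_const {F G : ℝ → ℝ} (h : Majorizes F G) {Z : ℝ} (hZ : 0 ≤ Z) :
    Majorizes (fun x => F x / Z) (fun x => G x / Z) := by
  intro B hB hBfin
  obtain ⟨A, hA, hAB, hle⟩ := h B hB hBfin
  refine ⟨A, hA, hAB, ?_⟩
  rw [integral_div, integral_div]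
  exact div_le_div_of_nonneg_right hle hZ

theorem Majorizes.indicator_Ioo {f g G : ℝ → ℝ} {c : ℝ} (hmaj : Majorizes f g)
    (hf : Integrable f) (hmono : ∀ x y : ℝ, |x| ≤ |y| → f y ≤ f x) (hg : Integrable g)
    (hG : Integrable G) (hG0 : ∀ x, 0 ≤ G x) (hGg : ∀ x, G x ≤ g x)
    (hGf : ∫ x, G x ≤ ∫ x in Ioo (-c) c, f x) :
    Majorizes ((Ioo (-c) c).indicator f) G := by
  intro B hB hBfin
  set m := volume.real B
  have hvol : ∀ a b : ℝ, b - a = m → volume (Ioo a b) = volume B := fun a b hab => by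
    rw [Real.volume_Ioo, hab, ofReal_measureReal hBfin.ne]
  rcases lt_or_ge m (2 * c) with hm | hm
  · obtain ⟨A, hA, hAB, hle⟩ := hmaj B hB hBfin
    have hAm : volume.real A = m := by simp only [Measure.real, hAB, m]
    have hsub : Ioo (-(m / 2)) (m / 2) ⊆ Ioo (-c) c := Ioo_subset_Ioo (by linarith) (by linarith)
    refine ⟨Ioo (-(m / 2)) (m / 2), measurableSet_Ioo, hvol _ _ (by ring), ?_⟩
    calc ∫ x in B, G x
        ≤ ∫ x in B, g x :=
          setIntegral_mono_on hG.integrableOn hg.integrableOn hB fun x _ => hGg x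
      _ ≤ ∫ x in A, f x := hle
      _ ≤ ∫ x in Ioo (-(m / 2)) (m / 2), f x :=
          hAm ▸ setIntegral_le_setIntegral_centred_Ioo hf hmono hA (hAB ▸ hBfin.ne)
      _ = ∫ x in Ioo (-(m / 2)) (m / 2), (Ioo (-c) c).indicator f x := by
          rw [setIntegral_indicator measurableSet_Ioo, inter_eq_left.mpr hsub]
  · have hsup : Ioo (-c) c ⊆ Ioo (-c) (m - c) := Ioo_subset_Ioo_right (by linarith)
    refine ⟨Ioo (-c) (m - c), measurableSet_Ioo, hvol _ _ (by ring), ?_⟩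
    calc ∫ x in B, G x
        ≤ ∫ x, G x := setIntegral_le_integral hG (ae_of_all _ hG0)
      _ ≤ ∫ x in Ioo (-c) c, f x := hGf
      _ = ∫ x in Ioo (-c) (m - c), (Ioo (-c) c).indicator f x := by
          rw [setIntegral_indicator measurableSet_Ioo, inter_eq_right.mpr hsup]

/-- Lemma 2 of Lipsa–Martins. -/
theorem majorizes_of_conditioning_general (f g h : ℝ → ℝ) (c : ℝ)
    (hf : IsPdf f) (hg : IsPdf g)
    (hfe : EvenFun f) (hfq : QuasiConcave f)
    (hmaj : Majorizes f g)
    (hh : Measurable h) (hh0 : ∀ x, 0 ≤ h x) (hh1 : ∀ x, h x ≤ 1)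
    (heq : (∫ x, f x * Set.indicator (Set.Ioo (-c) c) (fun _ => (1:ℝ)) x)
            = ∫ x, g x * h x) :
    Majorizes
      (fun x => f x * Set.indicator (Set.Ioo (-c) c) (fun _ => (1:ℝ)) x /
        (∫ x, f x * Set.indicator (Set.Ioo (-c) c) (fun _ => (1:ℝ)) x))
      (fun x => g x * h x / (∫ x, g x * h x)) := by
  have hgh0 : ∀ x, 0 ≤ g x * h x := fun x => mul_nonneg (hg.1 x) (hh0 x)
  have hgh : ∀ x, g x * h x ≤ g x := fun x => mul_le_of_le_one_right (hg.1 x) (hh1 x)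
  have hgh_int : Integrable (fun x => g x * h x) :=
    hg.2.1.mono' (hg.2.1.aestronglyMeasurable.mul hh.aestronglyMeasurable)
      (ae_of_all _ fun x => (Real.norm_of_nonneg (hgh0 x)).trans_le (hgh x))
  have hind : ∀ x,
      f x * (Ioo (-c) c).indicator (fun _ => (1 : ℝ)) x = (Ioo (-c) c).indicator f x := fun x => by
    simp only [← indicator_mul_right, mul_one]
  simp only [hind] at heq ⊢
  rw [heq]
  refine (hmaj.indicator_Ioo hf.2.1 (fun x y => hfe.apply_le_of_abs_le hfq) hg.2.1 hgh_int hgh0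
    hgh ?_).div_const (integral_nonneg hgh0)
  rw [← heq, integral_indicator measurableSet_Ioo]

/-- Conditioning preserves majorization (Lemma 2 of Lipsa–Martins). -/
theorem majorizes_of_conditioning (f g h : ℝ → ℝ) (c : ℝ)
    (hf : IsPdf f) (hg : IsPdf g)
    (hfe : EvenFun f) (hfq : QuasiConcave f)
    (hmaj : Majorizes f g)
    (hc : 0 < c)
    (hh : Measurable h) (hh0 : ∀ x, 0 ≤ h x) (hh1 : ∀ x, h x ≤ 1)
    (heq : (∫ x, f x * Set.indicator (Set.Ioo (-c) c) (fun _ => (1:ℝ)) x)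
            = ∫ x, g x * h x)
    (hpos : 0 < ∫ x, g x * h x) :
    Majorizes
      (fun x => f x * Set.indicator (Set.Ioo (-c) c) (fun _ => (1:ℝ)) x /
        (∫ x, f x * Set.indicator (Set.Ioo (-c) c) (fun _ => (1:ℝ)) x))
      (fun x => g x * h x / (∫ x, g x * h x)) :=
  majorizes_of_conditioning_general f g h c hf hg hfe hfq hmaj hh hh0 hh1 heq
end

section
/- Renewal-reward theorem (expectation form): Let Z₀, Z₁, … be i.i.d. positive random variables with 0 < E[Z₀] < ∞ and R₀, R₁, … i.i.d. rewards with E[|R₀|] < ∞, with (Zᵢ) independent of (Rᵢ). Define Q_t = #{i ≥ 0 : Z₀ + … + Z_i ≤ t} and S_t = Σ_{i=0}^{Q_t} R_i. Then lim_{T→∞} E[S_T]/T = E[R₀]/E[Z₀]. -/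
open MeasureTheory ProbabilityTheory Filter

/-!
Write `U(t) = ∑ₙ P(Z₀ + ⋯ + Z_{n-1} ≤ t)`. Since the event `{Z₀ + ⋯ + Z_{n-1} ≤ t}` is
independent of `Zₙ` and of `Rₙ`, Wald's argument gives `E[S_t] = E[R₀] U(t)`, so everything
reduces to the elementary renewal theorem `U(t) / t → 1 / E[Z₀]`. The same argument applied
to the `Zₙ` themselves shows that `E[Z₀] U(t)` is the mean of the first partial sum exceeding `t`,
hence at least `t`; such a partial sum exists almost surely by the strong law. Weighting the same
events by the truncations `min Zₙ M` instead, the weighted sum overshoots `t` by at most `M`,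
so `E[min Z₀ M] U(t) ≤ t + M`, and `E[min Z₀ M] → E[Z₀]` as `M → ∞`.
-/

open Finset Topology
open scoped ENNReal

section PartialSums

variable {z : ℕ → ℝ} {t : ℝ}

lemma exists_sum_range_le_iff_lt (hz : ∀ k, 0 ≤ z k)
    (htop : Tendsto (fun n => ∑ k ∈ range n, z k) atTop atTop) (t : ℝ) :
    ∃ m, ∀ n, ∑ k ∈ range n, z k ≤ t ↔ n < m := by
  classical
  have hex : ∃ n, t < ∑ k ∈ range n, z k := (htop.eventually_gt_atTop t).exists
  refine ⟨Nat.find hex, fun n => ⟨fun hn => ?_, fun hn => not_lt.1 (Nat.find_min hex hn)⟩⟩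
  by_contra! h
  refine (Nat.find_spec hex).not_ge (le_trans ?_ hn)
  exact sum_le_sum_of_subset_of_nonneg (range_subset_range.2 h) fun k _ _ => hz k

lemma card_setOf_sum_range_succ_le_add_one {m : ℕ} (hm : ∀ n, ∑ k ∈ range n, z k ≤ t ↔ n < m)
    (ht : 0 ≤ t) : Nat.card {i | ∑ k ∈ range (i + 1), z k ≤ t} + 1 = m := by
  have hm0 : 0 < m := (hm 0).1 (by simpa using ht)
  have hset : {i | ∑ k ∈ range (i + 1), z k ≤ t} = ↑(range (m - 1)) := by
    ext i
    simp only [Set.mem_ofPred_eq, hm, coe_range, Set.mem_Iio]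
    omega
  rw [hset, Nat.card_coe_set_eq, Set.ncard_coe_finset, card_range]
  omega

lemma tsum_indicator_eq_sum_range {α M : Type*} [AddCommMonoid M] [TopologicalSpace M]
    {B : ℕ → Set α} {f : ℕ → α → M} {a : α} {m : ℕ} (h : ∀ n, a ∈ B n ↔ n < m) :
    ∑' n, (B n).indicator (f n) a = ∑ n ∈ range m, f n a := by
  rw [sum_eq_tsum_indicator]
  congr with n
  classical
  simp [Set.indicator_apply, h]

/- Only the last index `k` with `∑ j < k, z j ≤ t` can carry the sum past `t`, and by at most
`M`. -/
lemma sum_range_ite_sum_range_le_le_add {y : ℕ → ℝ} {M : ℝ} (hz : ∀ k, 0 ≤ z k)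
    (hyz : ∀ k, y k ≤ z k) (hyM : ∀ k, y k ≤ M) (ht : 0 ≤ t) (hM : 0 ≤ M) (n : ℕ) :
    ∑ k ∈ range n, (if ∑ j ∈ range k, z j ≤ t then y k else 0) ≤ t + M := by
  suffices h : ∀ n, ∑ k ∈ range n, (if ∑ j ∈ range k, z j ≤ t then y k else 0) ≤
      ∑ k ∈ range n, z k ∧ ∑ k ∈ range n, (if ∑ j ∈ range k, z j ≤ t then y k else 0) ≤ t + M
    from (h n).2
  intro n
  induction n with
  | zero => simp [add_nonneg ht hM]
  | succ n ih =>
    rw [sum_range_succ, sum_range_succ]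
    split_ifs with hn
    · constructor <;> linarith [ih.1, hyz n, hyM n]
    · constructor <;> linarith [ih.1, ih.2, hz n]

lemma tsum_ite_sum_range_le_le_ofReal_add {y : ℕ → ℝ} {M : ℝ} (hz : ∀ k, 0 ≤ z k)
    (hy : ∀ k, 0 ≤ y k) (hyz : ∀ k, y k ≤ z k) (hyM : ∀ k, y k ≤ M) (ht : 0 ≤ t) :
    ∑' k, (if ∑ j ∈ range k, z j ≤ t then ENNReal.ofReal (y k) else 0) ≤
      ENNReal.ofReal (t + M) := by
  refine ENNReal.tsum_le_of_sum_range_le fun n => ?_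
  have hite : ∀ k, (if ∑ j ∈ range k, z j ≤ t then ENNReal.ofReal (y k) else 0)
      = ENNReal.ofReal (if ∑ j ∈ range k, z j ≤ t then y k else 0) := fun k => by
    split_ifs <;> simp
  simp_rw [hite]
  rw [← ENNReal.ofReal_sum_of_nonneg fun k _ => by split_ifs <;> simp [hy k]]
  exact ENNReal.ofReal_le_ofReal
    (sum_range_ite_sum_range_le_le_add hz hyz hyM ht ((hy 0).trans (hyM 0)) n)

end PartialSums

lemma tendsto_div_of_le_mul_of_mul_le_add {u m' : ℝ → ℝ} {m : ℝ} (hm : 0 < m)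
    (hm' : Tendsto m' atTop (𝓝 m)) (hlow : ∀ t, 0 ≤ t → t ≤ m * u t)
    (hup : ∀ M t, 0 ≤ M → 0 ≤ t → m' M * u t ≤ t + M) :
    Tendsto (fun t => u t / t) atTop (𝓝 m⁻¹) := by
  refine tendsto_order.2 ⟨fun a ha => ?_, fun b hb => ?_⟩
  · filter_upwards [eventually_gt_atTop 0] with t ht
    rw [lt_div_iff₀ ht]
    calc a * t < m⁻¹ * t := by gcongr
      _ ≤ u t := (inv_mul_le_iff₀ hm).2 (hlow t ht.le)
  · obtain ⟨M, hM, hmM, hmMb⟩ := ((eventually_ge_atTop 0).and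
      ((hm'.eventually (eventually_gt_nhds hm)).and
        ((hm'.inv₀ hm.ne').eventually (eventually_lt_nhds hb)))).exists
    have hlim : Tendsto (fun t => (m' M)⁻¹ * (1 + M / t)) atTop (𝓝 ((m' M)⁻¹ * (1 + 0))) :=
      ((tendsto_const_nhds.div_atTop tendsto_id).const_add 1).const_mul _
    rw [add_zero, mul_one] at hlim
    filter_upwards [hlim.eventually (eventually_lt_nhds hmMb), eventually_gt_atTop 0]
      with t hlt ht
    refine lt_of_le_of_lt ?_ hlt
    rw [div_le_iff₀ ht, mul_add, mul_one, add_mul, mul_assoc, div_mul_cancel₀ _ ht.ne', ← mul_add,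
      le_inv_mul_iff₀ hmM]
    linarith [hup M t hM ht.le]

lemma tendsto_integral_min_atTop {Ω : Type*} [MeasurableSpace Ω] {P : Measure Ω} {f : Ω → ℝ}
    (hf : Integrable f P) :
    Tendsto (fun M : ℝ => ∫ ω, min (f ω) M ∂P) atTop (𝓝 (∫ ω, f ω ∂P)) := by
  refine tendsto_integral_filter_of_dominated_convergence (fun ω => |f ω|)
    (.of_forall fun M => hf.1.inf aestronglyMeasurable_const) ?_ hf.abs
    (.of_forall fun ω => tendsto_const_nhds.congr' ?_)
  · filter_upwards [eventually_ge_atTop 0] with M hM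
    refine .of_forall fun ω => ?_
    rcases le_total (f ω) M with h | h
    · rw [min_eq_left h, Real.norm_eq_abs]
    · rw [min_eq_right h, Real.norm_eq_abs, abs_of_nonneg hM, abs_of_nonneg (hM.trans h)]
      exact h
  · filter_upwards [eventually_ge_atTop (f ω)] with M hM
    exact (min_eq_left hM).symm

lemma ProbabilityTheory.iIndepFun.indepFun_sum_range_embedding {Ω ι : Type*} [MeasurableSpace Ω]
    {P : Measure Ω} {f : ι → Ω → ℝ} (hf : iIndepFun f P) (hmeas : ∀ i, AEMeasurable (f i) P)
    (e : ℕ ↪ ι) {n : ℕ} {i : ι} (hi : ∀ k < n, e k ≠ i) :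
    IndepFun (fun ω => ∑ k ∈ range n, f (e k) ω) (f i) P := by
  have h := hf.indepFun_finsetSum_of_notMem₀ hmeas (s := (range n).map e) (i := i)
    (by simpa using hi)
  rwa [sum_map, sum_fn] at h

section Wald

variable {Ω β : Type*} [MeasurableSpace Ω] [MeasurableSpace β] {P : Measure Ω} {s : Set β}

lemma lintegral_indicator_preimage_of_indepFun {W : Ω → β} {f : Ω → ℝ≥0∞}
    (hWf : IndepFun W f P) (hW : Measurable W) (hf : AEMeasurable f P) (hs : MeasurableSet s) :
    ∫⁻ ω, (W ⁻¹' s).indicator f ω ∂P = P (W ⁻¹' s) * ∫⁻ ω, f ω ∂P := by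
  have hind : Measurable (s.indicator (1 : β → ℝ≥0∞)) := measurable_one.indicator hs
  calc ∫⁻ ω, (W ⁻¹' s).indicator f ω ∂P = ∫⁻ ω, (s.indicator 1 ∘ W) ω * f ω ∂P := by
        congr with ω
        by_cases h : W ω ∈ s <;> simp [h]
    _ = P (W ⁻¹' s) * ∫⁻ ω, f ω ∂P := by
        rw [lintegral_mul_eq_lintegral_mul_lintegral_of_indepFun'' (hind.comp hW).aemeasurable hf
          (hWf.comp hind measurable_id)]
        simp [← Set.indicator_comp_right, lintegral_indicator_one (hW hs)]

lemma integral_indicator_preimage_of_indepFun {W : Ω → β} {f : Ω → ℝ}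
    (hWf : IndepFun W f P) (hW : Measurable W) (hf : AEStronglyMeasurable f P)
    (hs : MeasurableSet s) :
    ∫ ω, (W ⁻¹' s).indicator f ω ∂P = P.real (W ⁻¹' s) * ∫ ω, f ω ∂P := by
  have hind : Measurable (s.indicator (1 : β → ℝ)) := measurable_one.indicator hs
  calc ∫ ω, (W ⁻¹' s).indicator f ω ∂P = ∫ ω, (s.indicator 1 ∘ W) ω * f ω ∂P := by
        congr with ω
        by_cases h : W ω ∈ s <;> simp [h]
    _ = P.real (W ⁻¹' s) * ∫ ω, f ω ∂P := by
        rw [IndepFun.integral_fun_mul_eq_mul_integral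
          (show IndepFun (s.indicator 1 ∘ W) f P from hWf.comp hind measurable_id)
          (hind.comp hW).aestronglyMeasurable hf]
        simp [← Set.indicator_comp_right, integral_indicator_one (hW hs)]

lemma lintegral_tsum_indicator_preimage {W : ℕ → Ω → β} {f : ℕ → Ω → ℝ≥0∞}
    (hWf : ∀ n, IndepFun (W n) (f n) P) (hW : ∀ n, Measurable (W n))
    (hf : ∀ n, IdentDistrib (f n) (f 0) P P) (hs : MeasurableSet s) :
    ∫⁻ ω, ∑' n, (W n ⁻¹' s).indicator (f n) ω ∂P = (∑' n, P (W n ⁻¹' s)) * ∫⁻ ω, f 0 ω ∂P := by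
  rw [lintegral_tsum fun n => (hf n).aemeasurable_fst.indicator (hW n hs),
    ← ENNReal.tsum_mul_right]
  refine tsum_congr fun n => ?_
  rw [lintegral_indicator_preimage_of_indepFun (hWf n) (hW n) (hf n).aemeasurable_fst hs,
    (hf n).lintegral_eq]

lemma integral_tsum_indicator_preimage {W : ℕ → Ω → β} {g : ℕ → Ω → ℝ}
    (hWg : ∀ n, IndepFun (W n) (g n) P) (hW : ∀ n, Measurable (W n))
    (hg : ∀ n, IdentDistrib (g n) (g 0) P P) (hg0 : Integrable (g 0) P) (hs : MeasurableSet s)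
    (hfin : ∑' n, P (W n ⁻¹' s) ≠ ∞) :
    ∫ ω, ∑' n, (W n ⁻¹' s).indicator (g n) ω ∂P
      = (∑' n, P (W n ⁻¹' s)).toReal * ∫ ω, g 0 ω ∂P := by
  have hnorm : ∑' n, ∫⁻ ω, ‖(W n ⁻¹' s).indicator (g n) ω‖ₑ ∂P ≠ ∞ := by
    simp_rw [enorm_indicator_eq_indicator_enorm]
    rw [← lintegral_tsum fun n => (hg n).aemeasurable_fst.enorm.indicator (hW n hs),
      lintegral_tsum_indicator_preimage (W := W) (f := fun n ω => ‖g n ω‖ₑ)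
        (fun n => (hWg n).comp measurable_id measurable_enorm) hW
        (fun n => (hg n).comp measurable_enorm) hs]
    exact ENNReal.mul_ne_top hfin hg0.2.ne
  rw [integral_tsum (fun n => (hg n).aestronglyMeasurable_fst.indicator (hW n hs)) hnorm,
    ENNReal.tsum_toReal_eq (ENNReal.ne_top_of_tsum_ne_top hfin), ← tsum_mul_right]
  refine tsum_congr fun n => ?_
  rw [integral_indicator_preimage_of_indepFun (hWg n) (hW n) (hg n).aestronglyMeasurable_fst hs,
    (hg n).integral_eq, measureReal_def]

end Wald

section Renewal

variable {Ω : Type*} [MeasurableSpace Ω] {P : Measure Ω} {X : ℕ → Ω → ℝ}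

noncomputable def renewalFunction (P : Measure Ω) (X : ℕ → Ω → ℝ) (t : ℝ) : ℝ≥0∞ :=
  ∑' n, P {ω | ∑ k ∈ range n, X k ω ≤ t}

lemma ae_tendsto_sum_range_atTop (hint : Integrable (X 0) P)
    (hid : ∀ i, IdentDistrib (X i) (X 0) P P) (hindep : iIndepFun X P)
    (hpos : 0 < ∫ ω, X 0 ω ∂P) :
    ∀ᵐ ω ∂P, Tendsto (fun n => ∑ k ∈ range n, X k ω) atTop atTop := by
  filter_upwards [strong_law_ae_real X hint (fun i j hij => hindep.indepFun hij) hid] with ω hω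
  refine (tendsto_natCast_atTop_atTop.atTop_mul_pos hpos hω).congr' ?_
  filter_upwards [eventually_ne_atTop 0] with n hn
  exact mul_div_cancel₀ _ (Nat.cast_ne_zero.2 hn)

lemma ofReal_le_mul_renewalFunction [IsProbabilityMeasure P] (hmeas : ∀ i, Measurable (X i))
    (hnonneg : ∀ i ω, 0 ≤ X i ω) (hint : Integrable (X 0) P)
    (hid : ∀ i, IdentDistrib (X i) (X 0) P P) (hindep : iIndepFun X P)
    (hpos : 0 < ∫ ω, X 0 ω ∂P) (t : ℝ) :
    ENNReal.ofReal t ≤ ENNReal.ofReal (∫ ω, X 0 ω ∂P) * renewalFunction P X t := by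
  have hwald := lintegral_tsum_indicator_preimage (W := fun n ω => ∑ k ∈ range n, X k ω)
    (f := fun n ω => ENNReal.ofReal (X n ω)) (s := Set.Iic t)
    (fun n => (hindep.indepFun_sum_range_embedding (fun i => (hmeas i).aemeasurable) (.refl ℕ)
      fun k hk => hk.ne).comp measurable_id ENNReal.measurable_ofReal)
    (fun n => Finset.measurable_sum _ fun k _ => hmeas k)
    (fun n => (hid n).comp ENNReal.measurable_ofReal) measurableSet_Iic
  rw [← ofReal_integral_eq_lintegral_ofReal hint (.of_forall (hnonneg 0)), mul_comm] at hwald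
  have hconst : ∫⁻ _, ENNReal.ofReal t ∂P = ENNReal.ofReal t := by simp
  refine hconst.symm.le.trans ((lintegral_mono_ae ?_).trans hwald.le)
  filter_upwards [ae_tendsto_sum_range_atTop hint hid hindep hpos] with ω hω
  obtain ⟨m, hm⟩ := exists_sum_range_le_iff_lt (fun k => hnonneg k ω) hω t
  rw [tsum_indicator_eq_sum_range (B := fun n => (fun ω => ∑ k ∈ range n, X k ω) ⁻¹' Set.Iic t) hm,
    ← ENNReal.ofReal_sum_of_nonneg fun k _ => hnonneg k ω]
  exact ENNReal.ofReal_le_ofReal (not_le.1 fun h => lt_irrefl m ((hm m).1 h)).le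

lemma mul_renewalFunction_le_ofReal_add [IsProbabilityMeasure P] (hmeas : ∀ i, Measurable (X i))
    (hnonneg : ∀ i ω, 0 ≤ X i ω) (hint : Integrable (X 0) P)
    (hid : ∀ i, IdentDistrib (X i) (X 0) P P) (hindep : iIndepFun X P) {M t : ℝ} (hM : 0 ≤ M)
    (ht : 0 ≤ t) :
    ENNReal.ofReal (∫ ω, min (X 0 ω) M ∂P) * renewalFunction P X t ≤ ENNReal.ofReal (t + M) := by
  have hmin : Measurable fun x : ℝ => min x M := measurable_id.min measurable_const
  have hwald := lintegral_tsum_indicator_preimage (W := fun n ω => ∑ k ∈ range n, X k ω)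
    (f := fun n ω => ENNReal.ofReal (min (X n ω) M)) (s := Set.Iic t)
    (fun n => (hindep.indepFun_sum_range_embedding (fun i => (hmeas i).aemeasurable) (.refl ℕ)
      fun k hk => hk.ne).comp measurable_id (ENNReal.measurable_ofReal.comp hmin))
    (fun n => Finset.measurable_sum _ fun k _ => hmeas k)
    (fun n => (hid n).comp (ENNReal.measurable_ofReal.comp hmin)) measurableSet_Iic
  rw [← ofReal_integral_eq_lintegral_ofReal (f := fun ω => min (X 0 ω) M)
    (hint.inf (integrable_const M)) (.of_forall fun ω => le_min (hnonneg 0 ω) hM),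
    mul_comm] at hwald
  have hconst : ∫⁻ _, ENNReal.ofReal (t + M) ∂P = ENNReal.ofReal (t + M) := by simp
  refine (hwald.symm.le.trans (lintegral_mono fun ω => ?_)).trans hconst.le
  classical
  simp only [Set.indicator_apply, Set.mem_preimage, Set.mem_Iic]
  exact tsum_ite_sum_range_le_le_ofReal_add (fun k => hnonneg k ω)
    (fun k => le_min (hnonneg k ω) hM) (fun k => min_le_left _ _) (fun k => min_le_right _ _) ht

lemma renewalFunction_ne_top [IsProbabilityMeasure P] (hmeas : ∀ i, Measurable (X i))
    (hnonneg : ∀ i ω, 0 ≤ X i ω) (hint : Integrable (X 0) P)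
    (hid : ∀ i, IdentDistrib (X i) (X 0) P P) (hindep : iIndepFun X P)
    (hpos : 0 < ∫ ω, X 0 ω ∂P) {t : ℝ} (ht : 0 ≤ t) :
    renewalFunction P X t ≠ ∞ := by
  obtain ⟨M, hM, hMpos⟩ := ((eventually_ge_atTop 0).and
    ((tendsto_integral_min_atTop hint).eventually (eventually_gt_nhds hpos))).exists
  intro htop
  have h := mul_renewalFunction_le_ofReal_add hmeas hnonneg hint hid hindep hM ht
  rw [htop, ENNReal.mul_top (ENNReal.ofReal_pos.2 hMpos).ne', top_le_iff] at h
  exact ENNReal.ofReal_ne_top h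

theorem tendsto_renewalFunction_toReal_div_atTop [IsProbabilityMeasure P]
    (hmeas : ∀ i, Measurable (X i)) (hnonneg : ∀ i ω, 0 ≤ X i ω) (hint : Integrable (X 0) P)
    (hid : ∀ i, IdentDistrib (X i) (X 0) P P) (hindep : iIndepFun X P)
    (hpos : 0 < ∫ ω, X 0 ω ∂P) :
    Tendsto (fun t => (renewalFunction P X t).toReal / t) atTop (𝓝 (∫ ω, X 0 ω ∂P)⁻¹) := by
  refine tendsto_div_of_le_mul_of_mul_le_add hpos (tendsto_integral_min_atTop hint)
    (fun t ht => ?_) (fun M t hM ht => ?_)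
  · have h := ofReal_le_mul_renewalFunction hmeas hnonneg hint hid hindep hpos t
    rwa [ENNReal.ofReal_le_iff_le_toReal (ENNReal.mul_ne_top ENNReal.ofReal_ne_top
      (renewalFunction_ne_top hmeas hnonneg hint hid hindep hpos ht)), ENNReal.toReal_mul,
      ENNReal.toReal_ofReal hpos.le] at h
  · have h := ENNReal.toReal_le_of_le_ofReal (by positivity)
      (mul_renewalFunction_le_ofReal_add hmeas hnonneg hint hid hindep hM ht)
    rwa [ENNReal.toReal_mul, ENNReal.toReal_ofReal
      (integral_nonneg fun ω => le_min (hnonneg 0 ω) hM)] at h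

end Renewal

theorem renewal_reward_general {Ω : Type*} [MeasurableSpace Ω] (P : Measure Ω)
    [IsProbabilityMeasure P]
    (Z R : ℕ → Ω → ℝ)
    (hZmeas : ∀ i, Measurable (Z i))
    (hZpos : ∀ i ω, 0 < Z i ω)
    (hZint : Integrable (Z 0) P) (hRint : Integrable (R 0) P)
    (hZmean : 0 < ∫ ω, Z 0 ω ∂P)
    (hZid : ∀ i, IdentDistrib (Z i) (Z 0) P P)
    (hRid : ∀ i, IdentDistrib (R i) (R 0) P P)
    (hindep : iIndepFun (Sum.elim Z R) P)
    (Q : ℝ → Ω → ℕ)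
    (hQ : ∀ t ω, Q t ω = Nat.card {i : ℕ | (∑ k ∈ Finset.range (i + 1), Z k ω) ≤ t})
    (S : ℝ → Ω → ℝ)
    (hS : ∀ t ω, S t ω = ∑ i ∈ Finset.range (Q t ω + 1), R i ω) :
    Tendsto (fun T : ℝ => (∫ ω, S T ω ∂P) / T) atTop
      (nhds ((∫ ω, R 0 ω ∂P) / (∫ ω, Z 0 ω ∂P))) := by
  have hZnonneg : ∀ i ω, 0 ≤ Z i ω := fun i ω => (hZpos i ω).le
  have hZindep : iIndepFun Z P := hindep.precomp (g := Sum.inl) Sum.inl_injective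
  have hSR : ∀ n, IndepFun (fun ω => ∑ k ∈ range n, Z k ω) (R n) P := fun n =>
    hindep.indepFun_sum_range_embedding
      (fun i => i.rec (fun k => (hZmeas k).aemeasurable) fun k => (hRid k).aemeasurable_fst)
      .inl (i := .inr n) fun _ _ => Sum.inl_ne_inr
  have hS_eq : ∀ t, 0 ≤ t → S t =ᵐ[P]
      fun ω => ∑' n, ((fun ω => ∑ k ∈ range n, Z k ω) ⁻¹' Set.Iic t).indicator (R n) ω := by
    intro t ht
    filter_upwards [ae_tendsto_sum_range_atTop hZint hZid hZindep hZmean] with ω hω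
    obtain ⟨m, hm⟩ := exists_sum_range_le_iff_lt (fun k => hZnonneg k ω) hω t
    rw [hS, hQ, card_setOf_sum_range_succ_le_add_one hm ht,
      tsum_indicator_eq_sum_range (B := fun n => (fun ω => ∑ k ∈ range n, Z k ω) ⁻¹' Set.Iic t) hm]
  have hES : ∀ t, 0 ≤ t →
      ∫ ω, S t ω ∂P = (renewalFunction P Z t).toReal * ∫ ω, R 0 ω ∂P := fun t ht => by
    rw [integral_congr_ae (hS_eq t ht)]
    exact integral_tsum_indicator_preimage hSR
      (fun n => Finset.measurable_sum _ fun k _ => hZmeas k) hRid hRint measurableSet_Iic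
      (renewalFunction_ne_top hZmeas hZnonneg hZint hZid hZindep hZmean ht)
  rw [div_eq_inv_mul]
  refine ((tendsto_renewalFunction_toReal_div_atTop hZmeas hZnonneg hZint hZid hZindep
    hZmean).mul_const _).congr' ?_
  filter_upwards [eventually_ge_atTop 0] with T hT
  rw [hES T hT, mul_div_right_comm]

/-- Renewal-reward theorem in expectation form. -/
theorem renewal_reward {Ω : Type*} [MeasurableSpace Ω] (P : Measure Ω)
    [IsProbabilityMeasure P]
    (Z R : ℕ → Ω → ℝ)
    (hZmeas : ∀ i, Measurable (Z i)) (hRmeas : ∀ i, Measurable (R i))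
    (hZpos : ∀ i ω, 0 < Z i ω)
    (hZint : Integrable (Z 0) P) (hRint : Integrable (R 0) P)
    (hZmean : 0 < ∫ ω, Z 0 ω ∂P)
    (hZid : ∀ i, IdentDistrib (Z i) (Z 0) P P)
    (hRid : ∀ i, IdentDistrib (R i) (R 0) P P)
    (hindep : iIndepFun (Sum.elim Z R) P)
    (Q : ℝ → Ω → ℕ)
    (hQ : ∀ t ω, Q t ω = Nat.card {i : ℕ | (∑ k ∈ Finset.range (i + 1), Z k ω) ≤ t})
    (S : ℝ → Ω → ℝ)
    (hS : ∀ t ω, S t ω = ∑ i ∈ Finset.range (Q t ω + 1), R i ω) :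
    Tendsto (fun T : ℝ => (∫ ω, S T ω ∂P) / T) atTop
      (nhds ((∫ ω, R 0 ω ∂P) / (∫ ω, Z 0 ω ∂P))) :=
  renewal_reward_general P Z R hZmeas hZpos hZint hRint hZmean hZid hRid hindep Q hQ S hS
end
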